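/- In the two-sided sequential matching model, assume every supplier is easy-to-match, i.e., each demand function Q_j : 2^N → [0,1] is monotone with Q_j(∅) = 0 and Q_j({i}) ≥ 1/2 for all i ∈ N; assume consumers follow MNL models with scores 0 < v_ij < 1; and let K_i ∈ ℤ_+ be cardinality budgets. Let (y*, w*, z*) be an optimal solution of the cardinality-constrained LP relaxation (11) and set x_ij = y*_ij/w*_i. Suppose for each i ∈ N there is a random vector X̂_i ∈ {0,1}^V such that (a) P(X̂_ij = 1) = x_ij for every j ∈ V; (b) Σ_{j∈V} X̂_ij ≤ K_i almost surely; (c) for every j with P(X̂_ij = 1) > 0 and every ℓ ≠ j, P(X̂_iℓ = 1 ∣ X̂_ij = 1) ≤ x_iℓ; and the vectors X̂_1,…,X̂_n are mutually independent. Then the random assortment family S with S_i = {j ∈ V : X̂_ij = 1} satisfies |S_i| ≤ K_i almost surely and E[E[M_S]] ≥ ((1 − 1/e)/4)·max over assortment families S' with |S'_i| ≤ K_i for all i of E[M_{S'}]. -/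

import Mathlib

/-!
Any feasible assortment family `S'` yields a feasible point of LP (11): take `w i` the
no-purchase probability of consumer `i` and `y i j = w i` on the menu. As
`E[Q_j] ≤ min 1 (∑ᵢ pᵢⱼ)`, the LP optimum dominates `E[M_{S'}]`. Conversely, for the rounded
menus, Cauchy–Schwarz and negative correlation show that consumer `i` picks `j` with
probability `qᵢⱼ ≥ v i j * ystar i j / 2`. Since `Q_j ≥ 1/2` on nonempty sets and the consumers
are independent, supplier `j` earns at least
`(1 - ∏ᵢ (1 - qᵢⱼ)) / 2 ≥ (1 - exp (-zstar j / 2)) / 2 ≥ (1 - e⁻¹) / 4 * zstar j`.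
-/

/-- Expected revenue of the matching when the assortment family is `S`:
`E[M_S] = ∑_j r_j · E[Q_j(A_j^S)]`, where consumer `i` independently selects supplier `j`
with probability `pc i j (S i)`. -/
def expRev {ι κ : Type*} [Fintype ι] [Fintype κ] [DecidableEq ι]
    (pc : ι → κ → Finset κ → ℝ) (Q : κ → Finset ι → ℝ) (r : κ → ℝ)
    (S : ι → Finset κ) : ℝ :=
  ∑ j : κ, r j * ∑ A : Finset ι,
    Q j A * ((∏ i ∈ A, pc i j (S i)) * ∏ i ∈ Aᶜ, (1 - pc i j (S i)))

/-- Multinomial logit choice probabilities with scores `v`. -/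
noncomputable def pcMNL {ι κ : Type*} [DecidableEq κ] (v : ι → κ → ℝ) (i : ι) (j : κ)
    (S : Finset κ) : ℝ :=
  if j ∈ S then v i j / (1 + ∑ ℓ ∈ S, v i ℓ) else 0

open Finset

section BernoulliSet

variable {ι : Type*} [Fintype ι] [DecidableEq ι]

/-- `E[Φ A]` for the random set `A` containing each `i` independently with probability `p i`. -/
def bernoulliExpect (p : ι → ℝ) (Φ : Finset ι → ℝ) : ℝ :=
  ∑ A : Finset ι, Φ A * ((∏ i ∈ A, p i) * ∏ i ∈ Aᶜ, (1 - p i))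

variable {p : ι → ℝ}

lemma bernoulliWeight_nonneg (hp : ∀ i, p i ∈ Set.Icc (0 : ℝ) 1) (A : Finset ι) :
    0 ≤ (∏ i ∈ A, p i) * ∏ i ∈ Aᶜ, (1 - p i) :=
  mul_nonneg (prod_nonneg fun i _ => (hp i).1) (prod_nonneg fun i _ => sub_nonneg.2 (hp i).2)

lemma bernoulliExpect_mono (hp : ∀ i, p i ∈ Set.Icc (0 : ℝ) 1) {Φ Ψ : Finset ι → ℝ}
    (h : ∀ A, Φ A ≤ Ψ A) : bernoulliExpect p Φ ≤ bernoulliExpect p Ψ :=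
  sum_le_sum fun A _ => mul_le_mul_of_nonneg_right (h A) (bernoulliWeight_nonneg hp A)

lemma bernoulliExpect_ite_eq_empty (c : ℝ) :
    bernoulliExpect p (fun A => if A = ∅ then 0 else c) = c * (1 - ∏ i, (1 - p i)) := by
  have htotal : ∑ A : Finset ι, (∏ i ∈ A, p i) * ∏ i ∈ Aᶜ, (1 - p i) = 1 := by
    simp [← Fintype.prod_add]
  have hsplit : ∀ A : Finset ι, (if A = ∅ then 0 else c) * ((∏ i ∈ A, p i) * ∏ i ∈ Aᶜ, (1 - p i))
      = c * ((∏ i ∈ A, p i) * ∏ i ∈ Aᶜ, (1 - p i)) - if A = ∅ then c * ∏ i, (1 - p i) else 0 := by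
    intro A
    split_ifs with hA <;> simp [hA]
  simp only [bernoulliExpect, hsplit, sum_sub_distrib, ← mul_sum, htotal, sum_ite_eq', mem_univ,
    if_true]
  ring

lemma bernoulliExpect_le_one_sub_prod (hp : ∀ i, p i ∈ Set.Icc (0 : ℝ) 1) {Φ : Finset ι → ℝ}
    (hΦ0 : Φ ∅ = 0) (hΦ1 : ∀ A, Φ A ≤ 1) : bernoulliExpect p Φ ≤ 1 - ∏ i, (1 - p i) := by
  calc bernoulliExpect p Φ ≤ bernoulliExpect p (fun A => if A = ∅ then 0 else 1) :=
        bernoulliExpect_mono hp fun A => by split_ifs with hA <;> simp [hA, hΦ0, hΦ1]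
    _ = 1 - ∏ i, (1 - p i) := by rw [bernoulliExpect_ite_eq_empty, one_mul]

lemma mul_one_sub_prod_le_bernoulliExpect (hp : ∀ i, p i ∈ Set.Icc (0 : ℝ) 1)
    {Φ : Finset ι → ℝ} {c : ℝ} (hΦ0 : 0 ≤ Φ ∅) (hΦ : ∀ A : Finset ι, A.Nonempty → c ≤ Φ A) :
    c * (1 - ∏ i, (1 - p i)) ≤ bernoulliExpect p Φ := by
  rw [← bernoulliExpect_ite_eq_empty]
  refine bernoulliExpect_mono hp fun A => ?_
  split_ifs with hA
  · simpa [hA] using hΦ0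
  · exact hΦ A (nonempty_iff_ne_empty.2 hA)

end BernoulliSet

lemma one_sub_prod_one_sub_le_sum {ι : Type*} (s : Finset ι) {p : ι → ℝ}
    (hp : ∀ i ∈ s, p i ∈ Set.Icc (0 : ℝ) 1) : 1 - ∏ i ∈ s, (1 - p i) ≤ ∑ i ∈ s, p i := by
  induction s using Finset.cons_induction with
  | empty => simp
  | cons a s ha ih =>
    obtain ⟨ha0, ha1⟩ := hp a (mem_cons_self a s)
    have hs := ih fun i hi => hp i (mem_cons_of_mem hi)
    have hprod : ∏ i ∈ s, (1 - p i) ≤ 1 :=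
      prod_le_one (fun i hi => sub_nonneg.2 (hp i (mem_cons_of_mem hi)).2)
        fun i hi => sub_le_self _ (hp i (mem_cons_of_mem hi)).1
    rw [prod_cons, sum_cons]
    nlinarith

lemma prod_one_sub_le_exp_neg_sum {ι : Type*} (s : Finset ι) {q : ι → ℝ}
    (hq : ∀ i ∈ s, q i ≤ 1) : ∏ i ∈ s, (1 - q i) ≤ Real.exp (-∑ i ∈ s, q i) := by
  rw [← sum_neg_distrib, Real.exp_sum]
  exact prod_le_prod (fun i hi => sub_nonneg.2 (hq i hi))
    fun i _ => by linarith [Real.add_one_le_exp (-q i)]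

lemma one_sub_inv_exp_one_nonneg : 0 ≤ 1 - (Real.exp 1)⁻¹ :=
  sub_nonneg.2 (inv_le_one_of_one_le₀ (Real.one_le_exp zero_le_one))

/-- The chord of the concave map `u ↦ 1 - exp (-u/2)` on `[0, 1]` has slope
`1 - e^{-1/2} ≥ (1 - e⁻¹)/2`. -/
lemma mul_le_one_sub_exp_neg_half {u : ℝ} (hu0 : 0 ≤ u) (hu1 : u ≤ 1) :
    (1 - (Real.exp 1)⁻¹) / 2 * u ≤ 1 - Real.exp (-(u / 2)) := by
  set a := Real.exp (-(1 / 2))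
  have hchord : Real.exp (-(u / 2)) ≤ (1 - u) + u * a := by
    have := convexOn_exp.2 (Set.mem_univ 0) (Set.mem_univ (-(1 / 2))) (sub_nonneg.2 hu1) hu0
      (by ring)
    simp only [smul_eq_mul, mul_zero, zero_add, Real.exp_zero, mul_one] at this
    rwa [show u * -(1 / 2) = -(u / 2) by ring] at this
  have ha2 : a ^ 2 = (Real.exp 1)⁻¹ := by
    rw [← Real.exp_neg, sq, ← Real.exp_add]
    norm_num
  nlinarith [mul_nonneg hu0 (sq_nonneg (1 - a))]

section MNL

variable {ι κ : Type*} [DecidableEq κ] {v : ι → κ → ℝ} {i : ι}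

lemma pcMNL_nonneg (hv : ∀ ℓ, 0 ≤ v i ℓ) (j : κ) (T : Finset κ) : 0 ≤ pcMNL v i j T := by
  unfold pcMNL
  split_ifs
  · exact div_nonneg (hv j) (add_nonneg zero_le_one (sum_nonneg fun ℓ _ => hv ℓ))
  · rfl

lemma pcMNL_le_one (hv : ∀ ℓ, 0 ≤ v i ℓ) (j : κ) (T : Finset κ) : pcMNL v i j T ≤ 1 := by
  unfold pcMNL
  split_ifs with hj
  · rw [div_le_one (add_pos_of_pos_of_nonneg zero_lt_one (sum_nonneg fun ℓ _ => hv ℓ))]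
    linarith [single_le_sum (fun ℓ _ => hv ℓ) hj]
  · exact zero_le_one

end MNL

lemma sq_sum_le_sum_mul_mul_sum_div {α : Type*} (s : Finset α) {m d : α → ℝ}
    (hm : ∀ a ∈ s, 0 ≤ m a) (hd : ∀ a ∈ s, 0 < d a) :
    (∑ a ∈ s, m a) ^ 2 ≤ (∑ a ∈ s, m a * d a) * ∑ a ∈ s, m a / d a :=
  sum_sq_le_sum_mul_sum_of_sq_le_mul s (fun a ha => mul_nonneg (hm a ha) (hd a ha).le)
    (fun a ha => div_nonneg (hm a ha) (hd a ha).le) fun a ha =>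
      le_of_eq (by field_simp [(hd a ha).ne'])

section NegativelyCorrelatedMenu

variable {κ : Type*} [Fintype κ] [DecidableEq κ] {m : Finset κ → ℝ} {x : κ → ℝ}

lemma nonneg_of_sum_ite_mem_eq (hm : ∀ T, 0 ≤ m T)
    (hmarg : ∀ ℓ, (∑ T, if ℓ ∈ T then m T else 0) = x ℓ) (ℓ : κ) : 0 ≤ x ℓ :=
  hmarg ℓ ▸ sum_nonneg fun T _ => by split_ifs <;> simp [hm T]

lemma sum_filter_mem_mul_one_add_sum_le {v : κ → ℝ} {j : κ} (hv0 : ∀ ℓ, 0 ≤ v ℓ)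
    (hvj : v j ≤ 1) (hm : ∀ T, 0 ≤ m T)
    (hmarg : ∀ ℓ, (∑ T, if ℓ ∈ T then m T else 0) = x ℓ)
    (hneg : ∀ ℓ, ℓ ≠ j → (∑ T, if ℓ ∈ T ∧ j ∈ T then m T else 0) ≤ x ℓ * x j) :
    ∑ T with j ∈ T, m T * (1 + ∑ ℓ ∈ T, v ℓ) ≤ x j * (2 + ∑ ℓ, v ℓ * x ℓ) := by
  have hx := nonneg_of_sum_ite_mem_eq hm hmarg
  have hexpand : ∑ T with j ∈ T, m T * (1 + ∑ ℓ ∈ T, v ℓ)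
      = x j + ∑ ℓ, v ℓ * ∑ T, if ℓ ∈ T ∧ j ∈ T then m T else 0 := by
    rw [sum_filter]
    calc _ = ∑ T, ((if j ∈ T then m T else 0) +
          ∑ ℓ, v ℓ * if ℓ ∈ T ∧ j ∈ T then m T else 0) := by
          refine sum_congr rfl fun T _ => ?_
          split_ifs with hj
          · simp [hj, mul_ite, sum_ite_mem, mul_add, mul_sum, mul_comm]
          · simp [hj]
      _ = _ := by rw [sum_add_distrib, sum_comm, hmarg j]; simp only [mul_sum]
  have hterm : ∀ ℓ, v ℓ * (∑ T, if ℓ ∈ T ∧ j ∈ T then m T else 0)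
      ≤ (if ℓ = j then x j else 0) + v ℓ * x ℓ * x j := by
    intro ℓ
    split_ifs with hℓ
    · subst hℓ
      simp only [and_self, hmarg]
      nlinarith [mul_nonneg (hv0 ℓ) (mul_nonneg (hx ℓ) (hx ℓ)), hx ℓ]
    · simpa [mul_assoc] using mul_le_mul_of_nonneg_left (hneg ℓ hℓ) (hv0 ℓ)
  have hsum := sum_le_sum fun ℓ (_ : ℓ ∈ univ) => hterm ℓ
  simp only [sum_add_distrib, sum_ite_eq', mem_univ, if_true, ← sum_mul] at hsum
  linarith

/-- By Cauchy–Schwarz, `x j ^ 2 ≤ E[1_{j ∈ T} (1 + v(T))] · E[1_{j ∈ T} / (1 + v(T))]`, and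
negative correlation bounds the first factor by `x j * (2 + ∑ ℓ, v ℓ * x ℓ) ≤ 2 * x j / w`. -/
theorem half_mul_le_sum_mul_pcMNL {ι : Type*} {v : ι → κ → ℝ} {i : ι} {j : κ} {w : ℝ}
    (hv0 : ∀ ℓ, 0 ≤ v i ℓ) (hvj : v i j ≤ 1) (hm : ∀ T, 0 ≤ m T)
    (hmarg : ∀ ℓ, (∑ T, if ℓ ∈ T then m T else 0) = x ℓ)
    (hneg : 0 < x j → ∀ ℓ, ℓ ≠ j → (∑ T, if ℓ ∈ T ∧ j ∈ T then m T else 0) ≤ x ℓ * x j)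
    (hw : w * (1 + ∑ ℓ, v i ℓ * x ℓ) = 1) :
    1 / 2 * (v i j * (x j * w)) ≤ ∑ T, m T * pcMNL v i j T := by
  set d : Finset κ → ℝ := fun T => 1 + ∑ ℓ ∈ T, v i ℓ
  set s := ∑ ℓ, v i ℓ * x ℓ
  have hx := nonneg_of_sum_ite_mem_eq hm hmarg
  have hd : ∀ T, 0 < d T := fun T =>
    add_pos_of_pos_of_nonneg zero_lt_one (sum_nonneg fun ℓ _ => hv0 ℓ)
  have hs : 0 ≤ s := sum_nonneg fun ℓ _ => mul_nonneg (hv0 ℓ) (hx ℓ)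
  have hxj : x j = ∑ T with j ∈ T, m T := by rw [sum_filter, hmarg]
  have hpc : ∑ T, m T * pcMNL v i j T = v i j * ∑ T with j ∈ T, m T / d T := by
    rw [sum_filter, mul_sum]
    refine sum_congr rfl fun T _ => ?_
    unfold pcMNL
    split_ifs <;> ring
  set G := ∑ T with j ∈ T, m T / d T
  have hG : 0 ≤ G := sum_nonneg fun T _ => div_nonneg (hm T) (hd T).le
  suffices x j * w ≤ 2 * G by rw [hpc]; nlinarith [hv0 j]
  rcases (hx j).eq_or_lt with hx0 | hxpos
  · rw [← hx0, zero_mul]; positivity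
  have hCS := hxj ▸ sq_sum_le_sum_mul_mul_sum_div (univ.filter (j ∈ ·)) (fun T _ => hm T)
    fun T _ => hd T
  have hB := sum_filter_mem_mul_one_add_sum_le hv0 hvj hm hmarg (hneg hxpos)
  have hxG : x j ≤ (2 + s) * G := by
    nlinarith [mul_le_mul_of_nonneg_right hB hG]
  have hw0 : 0 < w := pos_of_mul_pos_left (hw ▸ zero_lt_one) (by linarith)
  calc x j * w ≤ (2 + s) * G * w := mul_le_mul_of_nonneg_right hxG hw0.le
    _ = (1 + w) * G := by linear_combination G * hw
    _ ≤ 2 * G := by nlinarith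

end NegativelyCorrelatedMenu

lemma pos_of_add_sum_mul_eq_one {κ : Type*} [Fintype κ] {v y : κ → ℝ} {w : ℝ}
    (hy : ∀ j, 0 ≤ y j ∧ y j ≤ w) (h : w + ∑ j, v j * y j = 1) : 0 < w := by
  by_contra! hw
  have hy0 : ∀ j, y j = 0 := fun j => le_antisymm ((hy j).2.trans hw) (hy j).1
  simp only [hy0, mul_zero, sum_const_zero, add_zero] at h
  linarith

lemma mul_one_add_sum_mul_div_eq_one {κ : Type*} [Fintype κ] {v y : κ → ℝ} {w : ℝ} (hw : w ≠ 0)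
    (h : w + ∑ j, v j * y j = 1) : w * (1 + ∑ j, v j * (y j / w)) = 1 := by
  have hcancel : ∀ j, w * (v j * (y j / w)) = v j * y j := fun j => by field_simp
  simp only [mul_add, mul_one, mul_sum, hcancel, h]

section LP

variable {ι κ : Type*} [Fintype ι] [Fintype κ] [DecidableEq κ]

/-- The constraints of the cardinality-constrained LP relaxation (11). -/
def IsCardinalityLPFeasible (v : ι → κ → ℝ) (K : ι → ℕ) (y : ι → κ → ℝ) (w : ι → ℝ)
    (z : κ → ℝ) : Prop :=
  (∀ j, z j ≤ 1) ∧ (∀ j, z j ≤ ∑ i, v i j * y i j) ∧ (∀ i, w i + ∑ j, v i j * y i j = 1) ∧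
    (∀ i, ∑ j, y i j ≤ (K i : ℝ) * w i) ∧ ∀ i j, 0 ≤ y i j ∧ y i j ≤ w i

lemma isCardinalityLPFeasible_of_card_le {v : ι → κ → ℝ} (hv : ∀ i j, 0 ≤ v i j)
    {K : ι → ℕ} {S : ι → Finset κ} (hS : ∀ i, (S i).card ≤ K i) :
    IsCardinalityLPFeasible v K (fun i j => if j ∈ S i then (1 + ∑ ℓ ∈ S i, v i ℓ)⁻¹ else 0)
      (fun i => (1 + ∑ ℓ ∈ S i, v i ℓ)⁻¹) (fun j => min 1 (∑ i, pcMNL v i j (S i))) := by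
  have hpos : ∀ i, 0 < 1 + ∑ ℓ ∈ S i, v i ℓ := fun i =>
    add_pos_of_pos_of_nonneg zero_lt_one (sum_nonneg fun ℓ _ => hv i ℓ)
  have hvy : ∀ i j, v i j * (if j ∈ S i then (1 + ∑ ℓ ∈ S i, v i ℓ)⁻¹ else 0)
      = pcMNL v i j (S i) := fun i j => by
    unfold pcMNL
    split_ifs <;> simp [div_eq_mul_inv]
  refine ⟨fun j => min_le_left _ _, fun j => by simp only [hvy]; exact min_le_right _ _,
    fun i => ?_, fun i => ?_, fun i j => ?_⟩
  · simp only [mul_ite, mul_zero, sum_ite_mem, univ_inter, ← sum_mul]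
    field_simp [(hpos i).ne']
  · simp only [sum_ite_mem, univ_inter, sum_const, nsmul_eq_mul]
    exact mul_le_mul_of_nonneg_right (by exact_mod_cast hS i) (inv_pos.2 (hpos i)).le
  · dsimp only
    split_ifs <;> simp [(inv_pos.2 (hpos i)).le]

lemma expRev_pcMNL_le_of_forall_isCardinalityLPFeasible [DecidableEq ι] {v : ι → κ → ℝ}
    (hv : ∀ i j, 0 ≤ v i j) {Q : κ → Finset ι → ℝ} (hQ0 : ∀ j, Q j ∅ = 0)
    (hQ1 : ∀ j A, Q j A ≤ 1) {r : κ → ℝ} (hr : ∀ j, 0 ≤ r j) {K : ι → ℕ} {opt : ℝ}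
    (hopt : ∀ y w z, IsCardinalityLPFeasible v K y w z → ∑ j, r j * z j ≤ opt)
    {S : ι → Finset κ} (hS : ∀ i, (S i).card ≤ K i) : expRev (pcMNL v) Q r S ≤ opt := by
  refine le_trans (sum_le_sum fun j _ => mul_le_mul_of_nonneg_left ?_ (hr j))
    (hopt _ _ _ (isCardinalityLPFeasible_of_card_le hv hS))
  have hp : ∀ i, pcMNL v i j (S i) ∈ Set.Icc (0 : ℝ) 1 := fun i =>
    ⟨pcMNL_nonneg (hv i) j (S i), pcMNL_le_one (hv i) j (S i)⟩
  have hprod : 0 ≤ ∏ i, (1 - pcMNL v i j (S i)) := prod_nonneg fun i _ => sub_nonneg.2 (hp i).2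
  exact (bernoulliExpect_le_one_sub_prod hp (hQ0 j) (hQ1 j)).trans
    (le_min (by linarith) (one_sub_prod_one_sub_le_sum univ fun i _ => hp i))

end LP

section IndependentMenus

variable {ι α : Type*} [Fintype ι] [DecidableEq ι] [Fintype α] {m : ι → α → ℝ}

lemma sum_prod_mul_one_sub_prod (hm : ∀ i, ∑ a, m i a = 1) (p : ι → α → ℝ) :
    ∑ T : ι → α, (∏ i, m i (T i)) * (1 - ∏ i, (1 - p i (T i)))
      = 1 - ∏ i, (1 - ∑ a, m i a * p i a) := by
  have hrow : ∀ i, 1 - ∑ a, m i a * p i a = ∑ a, m i a * (1 - p i a) := fun i => by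
    simp only [mul_sub, mul_one, sum_sub_distrib, hm i]
  calc _ = ∑ T : ι → α, ∏ i, m i (T i) - ∑ T : ι → α, ∏ i, (m i (T i) * (1 - p i (T i))) := by
        rw [← sum_sub_distrib]
        exact sum_congr rfl fun T _ => by rw [prod_mul_distrib]; ring
    _ = ∏ i, ∑ a, m i a - ∏ i, ∑ a, m i a * (1 - p i a) := by
        rw [Fintype.prod_sum, Fintype.prod_sum]
    _ = _ := by simp only [hm, hrow, prod_const_one]

theorem mul_le_sum_prod_mul_bernoulliExpect {Φ : Finset ι → ℝ} (hΦ0 : 0 ≤ Φ ∅)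
    (hΦ : ∀ A : Finset ι, A.Nonempty → 1 / 2 ≤ Φ A) {p : ι → α → ℝ}
    (hp : ∀ i a, p i a ∈ Set.Icc (0 : ℝ) 1) (hm0 : ∀ i a, 0 ≤ m i a) (hm1 : ∀ i, ∑ a, m i a = 1)
    {z : ℝ} (hz1 : z ≤ 1) (hz : z ≤ 2 * ∑ i, ∑ a, m i a * p i a) :
    (1 - (Real.exp 1)⁻¹) / 4 * z ≤
      ∑ T : ι → α, (∏ i, m i (T i)) * bernoulliExpect (fun i => p i (T i)) Φ := by
  set q : ι → ℝ := fun i => ∑ a, m i a * p i a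
  have hq1 : ∀ i, q i ≤ 1 := fun i => by
    calc q i ≤ ∑ a, m i a := sum_le_sum fun a _ => mul_le_of_le_one_right (hm0 i a) (hp i a).2
      _ = 1 := hm1 i
  have hq0 : 0 ≤ ∑ i, q i :=
    sum_nonneg fun i _ => sum_nonneg fun a _ => mul_nonneg (hm0 i a) (hp i a).1
  set u := max z 0
  have hprod : ∏ i, (1 - q i) ≤ Real.exp (-(u / 2)) :=
    (prod_one_sub_le_exp_neg_sum univ fun i _ => hq1 i).trans
      (Real.exp_le_exp.2 (by linarith [max_le hz (by linarith : (0 : ℝ) ≤ 2 * ∑ i, q i)]))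
  calc (1 - (Real.exp 1)⁻¹) / 4 * z ≤ (1 - (Real.exp 1)⁻¹) / 4 * u :=
        mul_le_mul_of_nonneg_left (le_max_left z 0)
          (div_nonneg one_sub_inv_exp_one_nonneg zero_le_four)
    _ = 1 / 2 * ((1 - (Real.exp 1)⁻¹) / 2 * u) := by ring
    _ ≤ 1 / 2 * (1 - Real.exp (-(u / 2))) := by
        gcongr
        exact mul_le_one_sub_exp_neg_half (le_max_right z 0) (max_le hz1 zero_le_one)
    _ ≤ 1 / 2 * (1 - ∏ i, (1 - q i)) := by gcongr
    _ = ∑ T : ι → α, (∏ i, m i (T i)) * (1 / 2 * (1 - ∏ i, (1 - p i (T i)))) := by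
        simp only [mul_left_comm _ (1 / 2 : ℝ), ← mul_sum, sum_prod_mul_one_sub_prod hm1, q]
    _ ≤ _ := sum_le_sum fun T _ => mul_le_mul_of_nonneg_left
        (mul_one_sub_prod_le_bernoulliExpect (fun i => hp i (T i)) hΦ0 hΦ)
        (prod_nonneg fun i _ => hm0 i (T i))

end IndependentMenus

lemma sum_mul_expRev {ι κ : Type*} [Fintype ι] [Fintype κ] [DecidableEq ι]
    (π : (ι → Finset κ) → ℝ) (pc : ι → κ → Finset κ → ℝ) (Q : κ → Finset ι → ℝ) (r : κ → ℝ) :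
    ∑ T, π T * expRev pc Q r T
      = ∑ j, r j * ∑ T, π T * bernoulliExpect (fun i => pc i j (T i)) (Q j) := by
  simp only [expRev, bernoulliExpect, mul_sum]
  rw [sum_comm]
  exact sum_congr rfl fun j _ => sum_congr rfl fun T _ => sum_congr rfl fun A _ => by ring

lemma PMF.sum_toReal_eq_one {α : Type*} [Fintype α] (μ : PMF α) : ∑ a, (μ a).toReal = 1 := by
  have h := μ.tsum_coe
  rw [tsum_fintype] at h
  rw [← ENNReal.toReal_sum fun a _ => μ.apply_ne_top a, h, ENNReal.toReal_one]

theorem mnl_cardinality_approximation_general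
    {ι κ : Type*} [Fintype ι] [Fintype κ] [DecidableEq ι] [DecidableEq κ]
    (v : ι → κ → ℝ) (hv : ∀ i j, 0 < v i j ∧ v i j < 1)
    (Q : κ → Finset ι → ℝ)
    (hQrange : ∀ j A, Q j A ∈ Set.Icc (0 : ℝ) 1)
    (hQ0 : ∀ j, Q j ∅ = 0)
    (hQmono : ∀ j (A B : Finset ι), A ⊆ B → Q j A ≤ Q j B)
    (heasy : ∀ (j : κ) (i : ι), 1 / 2 ≤ Q j {i})
    (r : κ → ℝ) (hr : ∀ j, 0 ≤ r j)
    (K : ι → ℕ)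
    (ystar : ι → κ → ℝ) (wstar : ι → ℝ) (zstar : κ → ℝ)
    -- `(ystar, wstar, zstar)` is feasible for LP (11)
    (hz1 : ∀ j, zstar j ≤ 1)
    (hz2 : ∀ j, zstar j ≤ ∑ i : ι, v i j * ystar i j)
    (hw : ∀ i, wstar i + ∑ j : κ, v i j * ystar i j = 1)
    (hybounds : ∀ i j, 0 ≤ ystar i j ∧ ystar i j ≤ wstar i)
    -- and optimal for LP (11)
    (hopt : ∀ (y : ι → κ → ℝ) (w : ι → ℝ) (z : κ → ℝ),
      (∀ j, z j ≤ 1) →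
      (∀ j, z j ≤ ∑ i : ι, v i j * y i j) →
      (∀ i, w i + ∑ j : κ, v i j * y i j = 1) →
      (∀ i, ∑ j : κ, y i j ≤ (K i : ℝ) * w i) →
      (∀ i j, 0 ≤ y i j ∧ y i j ≤ w i) →
      ∑ j : κ, r j * z j ≤ ∑ j : κ, r j * zstar j)
    -- per-consumer rounding distributions `μ i` (the random menu of consumer `i`),
    -- mutually independent across consumers
    (μ : ι → PMF (Finset κ))
    -- (a) marginals: `P(X̂_{ij} = 1) = x_{ij} = ystar_{ij} / wstar_i`
    (hmarg : ∀ (i : ι) (j : κ),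
      (∑ T : Finset κ, if j ∈ T then ((μ i) T).toReal else 0) = ystar i j / wstar i)
    -- (b) budget feasibility almost surely
    (hbudget : ∀ i : ι, ∀ T ∈ (μ i).support, T.card ≤ K i)
    -- (c) negative correlation
    (hnegcor : ∀ (i : ι) (j : κ),
      (0 < ∑ T : Finset κ, if j ∈ T then ((μ i) T).toReal else 0) →
      ∀ ℓ : κ, ℓ ≠ j →
        (∑ T : Finset κ, if ℓ ∈ T ∧ j ∈ T then ((μ i) T).toReal else 0) ≤
          (ystar i ℓ / wstar i) *
            ∑ T : Finset κ, if j ∈ T then ((μ i) T).toReal else 0) :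
    -- the random assortment family is feasible almost surely, and its expected revenue
    -- is at least `((1 − 1/e)/4)` times the optimum among feasible assortment families
    (∀ T : ι → Finset κ, (∀ i, T i ∈ (μ i).support) → ∀ i, (T i).card ≤ K i) ∧
    (∀ S' : ι → Finset κ, (∀ i, (S' i).card ≤ K i) →
      ((1 - (Real.exp 1)⁻¹) / 4) * expRev (pcMNL v) Q r S' ≤
        ∑ T : ι → Finset κ,
          (∏ i : ι, ((μ i) (T i)).toReal) * expRev (pcMNL v) Q r T) := by
  refine ⟨fun T hT i => hbudget i (T i) (hT i), fun S hS => ?_⟩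
  have hv0 : ∀ i j, 0 ≤ v i j := fun i j => (hv i j).1.le
  have hwpos : ∀ i, 0 < wstar i := fun i => pos_of_add_sum_mul_eq_one (hybounds i) (hw i)
  have hchoice : ∀ i j, 1 / 2 * (v i j * ystar i j) ≤
      ∑ T, ((μ i) T).toReal * pcMNL v i j T := fun i j => by
    simpa only [div_mul_cancel₀ _ (hwpos i).ne'] using
      half_mul_le_sum_mul_pcMNL (hv0 i) (hv i j).2.le (fun T => ENNReal.toReal_nonneg) (hmarg i)
        (by simpa only [hmarg i j] using hnegcor i j)
        (mul_one_add_sum_mul_div_eq_one (hwpos i).ne' (hw i))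
  have hsupplier : ∀ j, (1 - (Real.exp 1)⁻¹) / 4 * zstar j ≤ ∑ T : ι → Finset κ,
      (∏ i, ((μ i) (T i)).toReal) * bernoulliExpect (fun i => pcMNL v i j (T i)) (Q j) :=
    fun j => mul_le_sum_prod_mul_bernoulliExpect (hQ0 j).ge
      (fun A ⟨i, hi⟩ => (heasy j i).trans (hQmono j _ _ (singleton_subset_iff.2 hi)))
      (fun i T => ⟨pcMNL_nonneg (hv0 i) j T, pcMNL_le_one (hv0 i) j T⟩)
      (fun i T => ENNReal.toReal_nonneg) (fun i => (μ i).sum_toReal_eq_one) (hz1 j)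
      (by linarith [hz2 j, mul_sum univ (fun i => v i j * ystar i j) (1 / 2 : ℝ),
        sum_le_sum fun i (_ : i ∈ univ) => hchoice i j])
  have hLP : expRev (pcMNL v) Q r S ≤ ∑ j, r j * zstar j :=
    expRev_pcMNL_le_of_forall_isCardinalityLPFeasible hv0 hQ0 (fun j A => (hQrange j A).2) hr
      (fun y w z ⟨h1, h2, h3, h4, h5⟩ => hopt y w z h1 h2 h3 h4 h5) hS
  calc (1 - (Real.exp 1)⁻¹) / 4 * expRev (pcMNL v) Q r S
      ≤ (1 - (Real.exp 1)⁻¹) / 4 * ∑ j, r j * zstar j :=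
        mul_le_mul_of_nonneg_left hLP (div_nonneg one_sub_inv_exp_one_nonneg zero_le_four)
    _ = ∑ j, r j * ((1 - (Real.exp 1)⁻¹) / 4 * zstar j) := by
        rw [mul_sum]
        exact sum_congr rfl fun j _ => mul_left_comm _ _ _
    _ ≤ _ := sum_le_sum fun j _ => mul_le_mul_of_nonneg_left (hsupplier j) (hr j)
    _ = _ := (sum_mul_expRev _ _ _ _).symm

/-- **Theorem 3.8.** With easy-to-match suppliers, MNL consumers with
scores `v_{ij} < 1`, and cardinality budgets `K_i`: rounding an optimal solution of the
cardinality-constrained LP relaxation (11) by any per-consumer dependent rounding scheme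
(mutually independent across consumers) with correct marginals, almost-sure budget
feasibility, and negative correlation yields a random assortment family that is feasible
almost surely and whose expected revenue is at least `((1 − 1/e)/4)·OPT`. -/
theorem mnl_cardinality_approximation
    {ι κ : Type*} [Fintype ι] [Fintype κ] [DecidableEq ι] [DecidableEq κ]
    (v : ι → κ → ℝ) (hv : ∀ i j, 0 < v i j ∧ v i j < 1)
    (Q : κ → Finset ι → ℝ)
    (hQrange : ∀ j A, Q j A ∈ Set.Icc (0 : ℝ) 1)
    (hQ0 : ∀ j, Q j ∅ = 0)
    (hQmono : ∀ j (A B : Finset ι), A ⊆ B → Q j A ≤ Q j B)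
    (heasy : ∀ (j : κ) (i : ι), 1 / 2 ≤ Q j {i})
    (r : κ → ℝ) (hr : ∀ j, 0 ≤ r j)
    (K : ι → ℕ)
    (ystar : ι → κ → ℝ) (wstar : ι → ℝ) (zstar : κ → ℝ)
    -- `(ystar, wstar, zstar)` is feasible for LP (11)
    (hz1 : ∀ j, zstar j ≤ 1)
    (hz2 : ∀ j, zstar j ≤ ∑ i : ι, v i j * ystar i j)
    (hw : ∀ i, wstar i + ∑ j : κ, v i j * ystar i j = 1)
    (hK : ∀ i, ∑ j : κ, ystar i j ≤ (K i : ℝ) * wstar i)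
    (hybounds : ∀ i j, 0 ≤ ystar i j ∧ ystar i j ≤ wstar i)
    -- and optimal for LP (11)
    (hopt : ∀ (y : ι → κ → ℝ) (w : ι → ℝ) (z : κ → ℝ),
      (∀ j, z j ≤ 1) →
      (∀ j, z j ≤ ∑ i : ι, v i j * y i j) →
      (∀ i, w i + ∑ j : κ, v i j * y i j = 1) →
      (∀ i, ∑ j : κ, y i j ≤ (K i : ℝ) * w i) →
      (∀ i j, 0 ≤ y i j ∧ y i j ≤ w i) →
      ∑ j : κ, r j * z j ≤ ∑ j : κ, r j * zstar j)
    -- per-consumer rounding distributions `μ i` (the random menu of consumer `i`),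
    -- mutually independent across consumers
    (μ : ι → PMF (Finset κ))
    -- (a) marginals: `P(X̂_{ij} = 1) = x_{ij} = ystar_{ij} / wstar_i`
    (hmarg : ∀ (i : ι) (j : κ),
      (∑ T : Finset κ, if j ∈ T then ((μ i) T).toReal else 0) = ystar i j / wstar i)
    -- (b) budget feasibility almost surely
    (hbudget : ∀ i : ι, ∀ T ∈ (μ i).support, T.card ≤ K i)
    -- (c) negative correlation
    (hnegcor : ∀ (i : ι) (j : κ),
      (0 < ∑ T : Finset κ, if j ∈ T then ((μ i) T).toReal else 0) →
      ∀ ℓ : κ, ℓ ≠ j →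
        (∑ T : Finset κ, if ℓ ∈ T ∧ j ∈ T then ((μ i) T).toReal else 0) ≤
          (ystar i ℓ / wstar i) *
            ∑ T : Finset κ, if j ∈ T then ((μ i) T).toReal else 0) :
    -- the random assortment family is feasible almost surely, and its expected revenue
    -- is at least `((1 − 1/e)/4)` times the optimum among feasible assortment families
    (∀ T : ι → Finset κ, (∀ i, T i ∈ (μ i).support) → ∀ i, (T i).card ≤ K i) ∧
    (∀ S' : ι → Finset κ, (∀ i, (S' i).card ≤ K i) →
      ((1 - (Real.exp 1)⁻¹) / 4) * expRev (pcMNL v) Q r S' ≤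
        ∑ T : ι → Finset κ,
          (∏ i : ι, ((μ i) (T i)).toReal) * expRev (pcMNL v) Q r T) :=
  mnl_cardinality_approximation_general v hv Q hQrange hQ0 hQmono heasy r hr K ystar wstar zstar hz1
    hz2 hw hybounds hopt μ hmarg hbudget hnegcor
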